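/- arXiv:2211.11517 — 8 statements merged into one kernel-verified Lean document; each statement's English description precedes it below -/
import Mathlib

section
/- For unit vectors u, v ∈ ℝ³, one has F(u) = F(v) if and only if u = v or u = −v; in particular F(−q) = F(q) for every q, so each fiber of F over its image consists of exactly the two antipodal points {q, −q}. -/
noncomputable section
open Matrix

/-- The outer product `q ⊗ v` of two vectors in `ℝ³`, with entries `(q ⊗ v) i j = q i * v j`. -/
def outer (q v : EuclideanSpace ℝ (Fin 3)) : Matrix (Fin 3) (Fin 3) ℝ :=
  fun i j => q i * v j

/-- The map `F(q) = 2 q⊗q − I₃`. -/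
def Fmap (q : EuclideanSpace ℝ (Fin 3)) : Matrix (Fin 3) (Fin 3) ℝ :=
  (2 : ℝ) • outer q q - 1

lemma Fmap_neg (q : EuclideanSpace ℝ (Fin 3)) : Fmap (-q) = Fmap q := by
  unfold Fmap outer
  congr 1
  funext i j
  simp

lemma Fmap_key (u v : EuclideanSpace ℝ (Fin 3)) (hu : ‖u‖ = 1) :
    Fmap u = Fmap v ↔ u = v ∨ u = -v := by
  constructor
  · intro h
    have h' : ∀ i j, u i * u j = v i * v j := by
      intro i j
      have h2 := congrFun (congrFun h i) j
      simp only [Fmap, outer, Matrix.sub_apply, Matrix.smul_apply, smul_eq_mul] at h2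
      linarith
    have hu0 : u ≠ 0 := by
      intro h0; rw [h0] at hu; simp at hu
    obtain ⟨i0, hi0⟩ : ∃ i, u i ≠ 0 := by
      by_contra hc; push_neg at hc
      exact hu0 (by ext i; simpa using hc i)
    have hsq := h' i0 i0
    rcases mul_self_eq_mul_self_iff.mp hsq with hc | hc
    · left
      ext j
      have h3 := h' i0 j
      rw [hc] at h3
      exact mul_left_cancel₀ (hc ▸ hi0) h3
    · right
      ext j
      have h3 := h' i0 j
      rw [hc] at h3
      have : v i0 * (-u j) = v i0 * v j := by ring_nf; ring_nf at h3; linarith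
      have hv0 : v i0 ≠ 0 := by
        intro h0; rw [h0] at hc; simp at hc; exact hi0 hc
      have := mul_left_cancel₀ hv0 this
      show u j = (-v) j
      simp [← this]
  · rintro (rfl | rfl)
    · rfl
    · rw [Fmap_neg]

/-- For unit vectors `u, v ∈ ℝ³`, `F(u) = F(v)` iff `u = v` or `u = −v`; moreover
`F(−q) = F(q)` for every `q`, and the fiber of `F` over `F(u)` is exactly `{u, −u}`. -/
theorem Fmap_fibers (u v : EuclideanSpace ℝ (Fin 3)) (hu : ‖u‖ = 1) (hv : ‖v‖ = 1) :
    (Fmap u = Fmap v ↔ u = v ∨ u = -v) ∧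
      (∀ q : EuclideanSpace ℝ (Fin 3), Fmap (-q) = Fmap q) ∧
      {w : EuclideanSpace ℝ (Fin 3) | ‖w‖ = 1 ∧ Fmap w = Fmap u} = {u, -u} := by
  refine ⟨Fmap_key u v hu, Fmap_neg, ?_⟩
  ext w
  simp only [Set.mem_setOf_eq, Set.mem_insert_iff, Set.mem_singleton_iff]
  constructor
  · rintro ⟨hw, hFw⟩
    exact (Fmap_key w u hw).mp hFw
  · rintro (rfl | rfl)
    · exact ⟨hu, rfl⟩
    · exact ⟨by simpa using hu, Fmap_neg u⟩
end
end

section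
/- Every real 3×3 matrix A with AᵀA = I₃, det A = 1, Aᵀ = A and trace A = −1 is of the form A = 2 q⊗q − I₃ for some unit vector q ∈ ℝ³; that is, the map F is surjective onto the set 𝒮 of 180°-rotations. -/
noncomputable section
open Matrix

private lemma sq_add_sq_zero {x y : ℝ} (h : x^2 + y^2 = 0) : x = 0 ∧ y = 0 := by
  constructor <;> nlinarith [sq_nonneg x, sq_nonneg y]

private lemma lagrange_aux (a b c d e f : ℝ)
    (h1 : a^2+d^2+e^2 = a) (h2 : d^2+b^2+f^2 = b) (h3 : e^2+f^2+c^2 = c)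
    (h4 : a*d+d*b+e*f = d) (h5 : a*e+d*f+e*c = e) (h6 : d*e+b*f+f*c = f)
    (ht : a+b+c = 1) :
    a*b = d^2 ∧ a*c = e^2 ∧ b*c = f^2 ∧ a*f = d*e ∧ b*e = d*f ∧ c*d = e*f := by
  have L1 : a*b - d^2 = (a*b-d^2)^2 + (a*f-e*d)^2 + (d*f-e*b)^2 := by
    linear_combination (-(d^2+b^2+f^2))*h1 - a*h2 + (a*d+d*b+e*f+d)*h4
  have L2 : a*c - e^2 = (a*c-e^2)^2 + (a*f-d*e)^2 + (d*c-e*f)^2 := by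
    linear_combination (-(e^2+f^2+c^2))*h1 - a*h3 + (a*e+d*f+e*c+e)*h5
  have L3 : b*c - f^2 = (b*c-f^2)^2 + (d*f-b*e)^2 + (d*c-e*f)^2 := by
    linear_combination (-(e^2+f^2+c^2))*h2 - b*h3 + (d*e+b*f+f*c+f)*h6
  have hsum : (a*b-d^2)+(a*c-e^2)+(b*c-f^2) = 0 := by
    linear_combination ((a+b+c)/2)*ht - (1/2)*h1 - (1/2)*h2 - (1/2)*h3
  have n1 : 0 ≤ a*b - d^2 := by rw [L1]; positivity
  have n2 : 0 ≤ a*c - e^2 := by rw [L2]; positivity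
  have n3 : 0 ≤ b*c - f^2 := by rw [L3]; positivity
  have z1 : a*b - d^2 = 0 := by linarith
  have z2 : a*c - e^2 = 0 := by linarith
  have z3 : b*c - f^2 = 0 := by linarith
  have q1 : (a*b-d^2)^2 = 0 := by rw [z1]; ring
  have q2 : (a*c-e^2)^2 = 0 := by rw [z2]; ring
  have q3 : (b*c-f^2)^2 = 0 := by rw [z3]; ring
  have s1 : (a*f-e*d)^2 + (d*f-e*b)^2 = 0 := by linarith
  have s3 : (d*f-b*e)^2 + (d*c-e*f)^2 = 0 := by linarith
  obtain ⟨w1, -⟩ := sq_add_sq_zero s1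
  obtain ⟨w2, w3⟩ := sq_add_sq_zero s3
  exact ⟨by linarith, by linarith, by linarith, by linear_combination w1,
    by linear_combination -w2, by linear_combination w3⟩

private lemma build (A : Matrix (Fin 3) (Fin 3) ℝ) (v : Fin 3 → ℝ) (s : ℝ) (hs : 0 < s)
    (hnorm : v 0 ^ 2 + v 1 ^ 2 + v 2 ^ 2 = s)
    (hentry : ∀ i j, s * A i j = 2 * (v i * v j) - s * (if i = j then 1 else 0)) :
    ∃ q : EuclideanSpace ℝ (Fin 3), ‖q‖ = 1 ∧ A = Fmap q := by
  have hs0 : s ≠ 0 := ne_of_gt hs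
  have hrs : Real.sqrt s > 0 := Real.sqrt_pos.mpr hs
  have hss : Real.sqrt s * Real.sqrt s = s := Real.mul_self_sqrt hs.le
  refine ⟨(WithLp.toLp 2 (fun i => v i / Real.sqrt s) : EuclideanSpace ℝ (Fin 3)), ?_, ?_⟩
  · rw [EuclideanSpace.norm_eq]
    simp only [Fin.sum_univ_three, Real.norm_eq_abs, sq_abs]
    have h1 : (v 0 / Real.sqrt s)^2 + (v 1 / Real.sqrt s)^2 + (v 2 / Real.sqrt s)^2 = 1 := by
      field_simp
      nlinarith [hnorm, hss]
    rw [h1, Real.sqrt_one]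
  · ext i j
    have h := hentry i j
    simp only [Fmap, outer, Matrix.sub_apply, Matrix.smul_apply, Matrix.one_apply, smul_eq_mul]
    rw [div_mul_div_comm, hss]
    by_cases hij : i = j <;> simp [hij] at h ⊢ <;> field_simp <;> linarith [h]

set_option maxHeartbeats 1600000 in
/-- Every symmetric special orthogonal 3×3 real matrix of trace `−1` is of the form
`2 q⊗q − I₃` for some unit vector `q ∈ ℝ³`, i.e. `F` is surjective onto the set of
180°-rotations. -/
theorem Fmap_surjective_onto_halfTurns (A : Matrix (Fin 3) (Fin 3) ℝ)
    (horth : Aᵀ * A = 1) (hdet : A.det = 1) (hsymm : Aᵀ = A) (htr : A.trace = -1) :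
    ∃ q : EuclideanSpace ℝ (Fin 3), ‖q‖ = 1 ∧ A = Fmap q := by
  have hAA : A * A = 1 := by
    calc A * A = Aᵀ * A := by rw [hsymm]
    _ = 1 := horth
  have hs10 : A 1 0 = A 0 1 := congrFun (congrFun hsymm 0) 1
  have hs20 : A 2 0 = A 0 2 := congrFun (congrFun hsymm 0) 2
  have hs21 : A 2 1 = A 1 2 := congrFun (congrFun hsymm 1) 2
  have e00 := congrFun (congrFun hAA 0) 0
  have e11 := congrFun (congrFun hAA 1) 1
  have e22 := congrFun (congrFun hAA 2) 2
  have e01 := congrFun (congrFun hAA 0) 1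
  have e02 := congrFun (congrFun hAA 0) 2
  have e12 := congrFun (congrFun hAA 1) 2
  simp only [Matrix.mul_apply, Fin.sum_univ_three, Matrix.one_apply,
    hs10, hs20, hs21] at e00 e11 e22 e01 e02 e12
  norm_num at e00 e11 e22 e01 e02 e12
  rw [if_neg (by decide : ¬((0:Fin 3) = 2))] at e02
  rw [if_neg (by decide : ¬((1:Fin 3) = 2))] at e12
  simp only [Matrix.trace, Matrix.diag, Fin.sum_univ_three] at htr
  obtain ⟨a, hA00⟩ : ∃ x : ℝ, A 0 0 = 2*x - 1 := ⟨(A 0 0 + 1)/2, by ring⟩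
  obtain ⟨b, hA11⟩ : ∃ x : ℝ, A 1 1 = 2*x - 1 := ⟨(A 1 1 + 1)/2, by ring⟩
  obtain ⟨c, hA22⟩ : ∃ x : ℝ, A 2 2 = 2*x - 1 := ⟨(A 2 2 + 1)/2, by ring⟩
  obtain ⟨d, hA01⟩ : ∃ x : ℝ, A 0 1 = 2*x := ⟨A 0 1 / 2, by ring⟩
  obtain ⟨e, hA02⟩ : ∃ x : ℝ, A 0 2 = 2*x := ⟨A 0 2 / 2, by ring⟩
  obtain ⟨f, hA12⟩ : ∃ x : ℝ, A 1 2 = 2*x := ⟨A 1 2 / 2, by ring⟩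
  rw [hA00, hA01, hA02] at e00
  rw [hA01, hA11, hA12] at e11
  rw [hA02, hA12, hA22] at e22
  rw [hA00, hA01, hA11, hA02, hA12] at e01
  rw [hA00, hA02, hA01, hA12, hA22] at e02
  rw [hA01, hA02, hA11, hA12, hA22] at e12
  rw [hA00, hA11, hA22] at htr
  have h1 : a^2+d^2+e^2 = a := by linear_combination (1/4)*e00
  have h2 : d^2+b^2+f^2 = b := by linear_combination (1/4)*e11
  have h3 : e^2+f^2+c^2 = c := by linear_combination (1/4)*e22
  have h4 : a*d+d*b+e*f = d := by linear_combination (1/4)*e01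
  have h5 : a*e+d*f+e*c = e := by linear_combination (1/4)*e02
  have h6 : d*e+b*f+f*c = f := by linear_combination (1/4)*e12
  have ht : a+b+c = 1 := by linear_combination (1/2)*htr
  obtain ⟨hab, hac, hbc, haf, hbe, hcd⟩ :=
    lagrange_aux a b c d e f h1 h2 h3 h4 h5 h6 ht
  have hna : 0 ≤ a := by rw [← h1]; positivity
  have hnb : 0 ≤ b := by rw [← h2]; positivity
  have hnc : 0 ≤ c := by rw [← h3]; positivity
  have hpos : 0 < a ∨ 0 < b ∨ 0 < c := by
    by_contra h
    push_neg at h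
    linarith [h.1, h.2.1, h.2.2]
  rcases hpos with hp | hp | hp
  · refine build A ![a, d, e] a hp (by simp; linear_combination h1) ?_
    intro i j
    fin_cases i <;> fin_cases j <;>
      simp [hA00, hA01, hA02, hA11, hA12, hA22, hs10, hs20, hs21] <;>
      first
        | ring1
        | linarith [hab, hac, hbc, haf, hbe, hcd]
  · refine build A ![d, b, f] b hp (by simp; linear_combination h2) ?_
    intro i j
    fin_cases i <;> fin_cases j <;>
      simp [hA00, hA01, hA02, hA11, hA12, hA22, hs10, hs20, hs21] <;>
      first
        | ring1
        | linarith [hab, hac, hbc, haf, hbe, hcd]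
  · refine build A ![e, f, c] c hp (by simp; linear_combination h3) ?_
    intro i j
    fin_cases i <;> fin_cases j <;>
      simp [hA00, hA01, hA02, hA11, hA12, hA22, hs10, hs20, hs21] <;>
      first
        | ring1
        | linarith [hab, hac, hbc, haf, hbe, hcd]
end
end

section
/- The map from the unit sphere S² = {q ∈ ℝ³ : ‖q‖ = 1} to the topological subspace 𝒮 = {A ∈ Matrix (Fin 3) (Fin 3) ℝ : AᵀA = I₃, det A = 1, Aᵀ = A, tr A = −1} of the space of 3×3 real matrices, given by q ↦ 2 q⊗q − I₃, is a covering map (a two-fold covering). -/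
noncomputable section
open Matrix
open scoped InnerProductSpace

/-- The set 𝒮 of 180°-rotations: symmetric special orthogonal 3×3 matrices of trace −1. -/
def halfTurns : Set (Matrix (Fin 3) (Fin 3) ℝ) :=
  {A | Aᵀ * A = 1 ∧ A.det = 1 ∧ Aᵀ = A ∧ A.trace = -1}

abbrev E3 := EuclideanSpace ℝ (Fin 3)

open scoped RealInnerProductSpace

lemma inner_eq (x y : E3) : ⟪x, y⟫_ℝ = ∑ i, x i * y i := by
  simp [PiLp.inner_apply, RCLike.inner_apply, mul_comm]

lemma sum_sq_eq_one {q : E3} (hq : ‖q‖ = 1) : ∑ i, q i * q i = 1 := by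
  have := real_inner_self_eq_norm_sq q
  rw [inner_eq] at this
  rw [this, hq]; ring

lemma exists_rep {A : Matrix (Fin 3) (Fin 3) ℝ} (hA : A ∈ halfTurns) :
    ∃ q : E3, ‖q‖ = 1 ∧ A = Fmap q := by
  obtain ⟨horth, -, hsym, htr⟩ := hA
  have h1 : A * A = 1 := by rw [← hsym]; nth_rewrite 2 [← hsym]; exact horth
  set P : Matrix (Fin 3) (Fin 3) ℝ := (1/2 : ℝ) • (A + 1) with hPdef
  have hP2 : P * P = P := by
    have h2 : (A + 1) * (A + 1) = (2:ℝ) • (A + 1) := by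
      rw [add_mul, mul_add, mul_add, h1, mul_one, one_mul, mul_one]
      rw [smul_add, two_smul, two_smul]
      abel
    rw [hPdef, smul_mul_assoc, mul_smul_comm, h2, smul_smul, smul_smul]
    norm_num
  have hPt : Pᵀ = P := by rw [hPdef, transpose_smul, transpose_add, hsym, transpose_one]
  have htrP : P.trace = 1 := by
    rw [hPdef, trace_smul, trace_add, htr, trace_one]
    norm_num [Fintype.card_fin]
  -- find a nonzero diagonal entry
  have hex : ∃ i, P i i ≠ 0 := by
    by_contra h
    push_neg at h
    rw [Matrix.trace] at htrP
    simp only [Matrix.diag] at htrP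
    rw [Finset.sum_congr rfl (fun i _ => h i)] at htrP
    simp at htrP
  obtain ⟨i0, hi0⟩ := hex
  set w : E3 := (WithLp.equiv 2 (Fin 3 → ℝ)).symm (fun k => P k i0) with hwdef
  have hwapp : ∀ k, w k = P k i0 := fun k => rfl
  have hPw : ∀ k, ∑ j, P k j * w j = w k := by
    intro k
    have := congrFun (congrFun hP2 k) i0
    rw [Matrix.mul_apply] at this
    simpa [hwapp] using this
  have hwne : w ≠ 0 := by
    intro h
    apply hi0
    have := congrFun (congrArg (WithLp.equiv 2 (Fin 3 → ℝ)) h) i0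
    simpa [hwdef] using this
  have hnw : ‖w‖ ≠ 0 := norm_ne_zero_iff.mpr hwne
  set q : E3 := ‖w‖⁻¹ • w with hqdef
  have hq : ‖q‖ = 1 := by
    rw [hqdef, norm_smul]
    simp [abs_of_nonneg (inv_nonneg.mpr (norm_nonneg w)), inv_mul_cancel₀ hnw]
  have hqapp : ∀ k, q k = ‖w‖⁻¹ * w k := fun k => rfl
  have hPq : ∀ k, ∑ j, P k j * q j = q k := by
    intro k
    simp only [hqapp]
    calc ∑ j, P k j * (‖w‖⁻¹ * w j) = ‖w‖⁻¹ * ∑ j, P k j * w j := by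
          rw [Finset.mul_sum]; exact Finset.sum_congr rfl fun j _ => by ring
    _ = ‖w‖⁻¹ * w k := by rw [hPw k]
  have hsum : ∑ j, q j * q j = 1 := sum_sq_eq_one hq
  -- Q := P - outer q q is symmetric idempotent with trace 0, hence 0
  set Q : Matrix (Fin 3) (Fin 3) ℝ := P - outer q q with hQdef
  have hPsym : ∀ i j, P i j = P j i := by
    intro i j
    have := congrFun (congrFun hPt j) i
    rw [Matrix.transpose_apply] at this
    exact this
  have hOP : P * outer q q = outer q q := by
    ext i j
    rw [Matrix.mul_apply]
    simp only [outer]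
    calc ∑ k, P i k * (q k * q j) = (∑ k, P i k * q k) * q j := by
          rw [Finset.sum_mul]; exact Finset.sum_congr rfl fun k _ => by ring
    _ = q i * q j := by rw [hPq i]
  have hPO : outer q q * P = outer q q := by
    ext i j
    rw [Matrix.mul_apply]
    simp only [outer]
    calc ∑ k, q i * q k * P k j = q i * ∑ k, P j k * q k := by
          rw [Finset.mul_sum]; exact Finset.sum_congr rfl fun k _ => by rw [hPsym k j]; ring
    _ = q i * q j := by rw [hPq j]
  have hOO : outer q q * outer q q = outer q q := by
    ext i j
    rw [Matrix.mul_apply]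
    simp only [outer]
    calc ∑ k, q i * q k * (q k * q j) = (q i * q j) * ∑ k, q k * q k := by
          rw [Finset.mul_sum]; exact Finset.sum_congr rfl fun k _ => by ring
    _ = q i * q j := by rw [hsum, mul_one]
  have hQ2 : Q * Q = Q := by
    rw [hQdef, sub_mul, mul_sub, mul_sub, hP2, hOP, hPO, hOO]
    abel
  have htrO : (outer q q).trace = 1 := by
    rw [Matrix.trace]
    simp only [Matrix.diag, outer]
    exact hsum
  have htrQ : Q.trace = 0 := by rw [hQdef, trace_sub, htrP, htrO]; ring
  have hQsym : ∀ i j, Q i j = Q j i := by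
    intro i j
    simp only [hQdef, Matrix.sub_apply, outer, hPsym i j, mul_comm]
  have hQ0 : Q = 0 := by
    have key : ∑ i, ∑ j, Q i j * Q i j = 0 := by
      have heq : ∑ i, ∑ j, Q i j * Q i j = Q.trace := by
        conv_rhs => rw [← hQ2]
        rw [Matrix.trace]
        simp only [Matrix.diag, Matrix.mul_apply]
        exact Finset.sum_congr rfl fun i _ => Finset.sum_congr rfl fun j _ => by
          rw [hQsym j i]
      rw [heq, htrQ]
    ext i j
    have h1 : ∀ i ∈ Finset.univ, (0:ℝ) ≤ ∑ j, Q i j * Q i j := fun i _ =>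
      Finset.sum_nonneg fun j _ => mul_self_nonneg _
    have h2 := (Finset.sum_eq_zero_iff_of_nonneg h1).mp key i (Finset.mem_univ i)
    have h3 : ∀ j ∈ Finset.univ, (0:ℝ) ≤ Q i j * Q i j := fun j _ => mul_self_nonneg _
    have h4 := (Finset.sum_eq_zero_iff_of_nonneg h3).mp h2 j (Finset.mem_univ j)
    have := mul_self_eq_zero.mp h4
    simpa using this
  have hPeq : P = outer q q := by
    have := sub_eq_zero.mp hQ0
    exact this
  refine ⟨q, hq, ?_⟩
  rw [Fmap, ← hPeq, hPdef, smul_smul]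
  norm_num

/-! ### Helper layer for the trivializations -/

def uvec (q₀ : E3) (A : Matrix (Fin 3) (Fin 3) ℝ) : E3 :=
  (WithLp.equiv 2 (Fin 3 → ℝ)).symm ((A + 1).mulVec (WithLp.equiv 2 (Fin 3 → ℝ) q₀))

lemma uvec_apply (q₀ : E3) (A : Matrix (Fin 3) (Fin 3) ℝ) (k : Fin 3) :
    uvec q₀ A k = ∑ j, (A + 1) k j * q₀ j := rfl

lemma uvec_Fmap (q₀ q : E3) : uvec q₀ (Fmap q) = (2 * ⟪q₀, q⟫_ℝ) • q := by
  have hA : Fmap q + 1 = (2:ℝ) • outer q q := by rw [Fmap, sub_add_cancel]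
  ext k
  rw [uvec_apply, PiLp.smul_apply, smul_eq_mul, inner_eq, hA]
  simp only [Matrix.smul_apply, outer, smul_eq_mul]
  calc ∑ j, 2 * (q k * q j) * q₀ j = 2 * (∑ j, q₀ j * q j) * q k := by
        rw [Finset.mul_sum, Finset.sum_mul]
        exact Finset.sum_congr rfl fun j _ => by ring

lemma Fmap_sign (ε : ℝ) (hε : ε ^ 2 = 1) (q : E3) : Fmap (ε • q) = Fmap q := by
  unfold Fmap
  congr 1
  congr 1
  ext i j
  simp only [outer, PiLp.smul_apply, smul_eq_mul]
  calc ε * q i * (ε * q j) = ε ^ 2 * (q i * q j) := by ring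
  _ = q i * q j := by rw [hε]; ring

def gfun (q₀ : E3) (p : Matrix (Fin 3) (Fin 3) ℝ × Bool) : E3 :=
  ((cond p.2 1 (-1) : ℝ)) • ‖uvec q₀ p.1‖⁻¹ • uvec q₀ p.1

lemma gfun_spec (q₀ q : E3) (hq : ‖q‖ = 1) (hc : ⟪q₀, q⟫_ℝ ≠ 0) (b : Bool) :
    gfun q₀ (Fmap q, b) = ((cond b 1 (-1) : ℝ) * (|⟪q₀, q⟫_ℝ|⁻¹ * ⟪q₀, q⟫_ℝ)) • q := by
  set c := ⟪q₀, q⟫_ℝ with hcdef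
  have hu : uvec q₀ (Fmap q) = (2 * c) • q := uvec_Fmap q₀ q
  have hnu : ‖uvec q₀ (Fmap q)‖ = 2 * |c| := by
    rw [hu, norm_smul, hq, mul_one, Real.norm_eq_abs, abs_mul, abs_two]
  rw [gfun, hu]
  rw [show ‖(2 * c) • q‖ = 2 * |c| from hu ▸ hnu]
  rw [smul_smul, smul_smul]
  congr 1
  have h2 : |c| ≠ 0 := abs_ne_zero.mpr hc
  field_simp

lemma sign_sq (c : ℝ) (hc : c ≠ 0) : (|c|⁻¹ * c) ^ 2 = 1 := by
  rcases abs_choice c with h | h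
  · rw [h]; field_simp
  · rw [h]; field_simp

lemma bool_sign_sq (b : Bool) : (cond b 1 (-1) : ℝ) ^ 2 = 1 := by cases b <;> norm_num

lemma gfun_norm (q₀ q : E3) (hq : ‖q‖ = 1) (hc : ⟪q₀, q⟫_ℝ ≠ 0) (b : Bool) :
    ‖gfun q₀ (Fmap q, b)‖ = 1 := by
  rw [gfun_spec q₀ q hq hc b, norm_smul, hq, mul_one, Real.norm_eq_abs]
  have := sq_abs ((cond b 1 (-1) : ℝ) * (|⟪q₀, q⟫_ℝ|⁻¹ * ⟪q₀, q⟫_ℝ))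
  have h1 : ((cond b 1 (-1) : ℝ) * (|⟪q₀, q⟫_ℝ|⁻¹ * ⟪q₀, q⟫_ℝ)) ^ 2 = 1 := by
    rw [mul_pow, bool_sign_sq, sign_sq _ hc, mul_one]
  nlinarith [abs_nonneg ((cond b 1 (-1) : ℝ) * (|⟪q₀, q⟫_ℝ|⁻¹ * ⟪q₀, q⟫_ℝ))]

lemma gfun_Fmap (q₀ q : E3) (hq : ‖q‖ = 1) (hc : ⟪q₀, q⟫_ℝ ≠ 0) (b : Bool) :
    Fmap (gfun q₀ (Fmap q, b)) = Fmap q := by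
  rw [gfun_spec q₀ q hq hc b]
  apply Fmap_sign
  rw [mul_pow, bool_sign_sq, sign_sq _ hc, mul_one]

lemma gfun_inner (q₀ q : E3) (hq : ‖q‖ = 1) (hc : ⟪q₀, q⟫_ℝ ≠ 0) (b : Bool) :
    ⟪q₀, gfun q₀ (Fmap q, b)⟫_ℝ = (cond b 1 (-1) : ℝ) * |⟪q₀, q⟫_ℝ| := by
  rw [gfun_spec q₀ q hq hc b, real_inner_smul_right]
  have : |⟪q₀, q⟫_ℝ|⁻¹ * ⟪q₀, q⟫_ℝ * ⟪q₀, q⟫_ℝ = |⟪q₀, q⟫_ℝ| := by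
    rcases abs_choice ⟪q₀, q⟫_ℝ with h | h
    · rw [h]; field_simp
    · rw [h, inv_neg, neg_mul, neg_mul, neg_inj, inv_mul_cancel₀ hc, one_mul]
  rw [mul_assoc, this]

lemma inner_uvec_Fmap (q₀ q : E3) : ⟪q₀, uvec q₀ (Fmap q)⟫_ℝ = 2 * ⟪q₀, q⟫_ℝ ^ 2 := by
  rw [uvec_Fmap, real_inner_smul_right]; ring

lemma base_iff (q₀ q : E3) : ⟪q₀, uvec q₀ (Fmap q)⟫_ℝ ≠ 0 ↔ ⟪q₀, q⟫_ℝ ≠ 0 := by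
  rw [inner_uvec_Fmap]
  constructor
  · intro h hc; exact h (by rw [hc]; ring)
  · intro h hc; exact h (by nlinarith [sq_nonneg ⟪q₀, q⟫_ℝ])

lemma cont_coord (k : Fin 3) : Continuous fun q : E3 => q k :=
  (continuous_apply k).comp (PiLp.continuous_ofLp 2 (fun _ : Fin 3 => ℝ))

lemma cont_Fmap : Continuous Fmap := by
  apply continuous_matrix
  intro i j
  simp only [Fmap, Matrix.sub_apply, Matrix.smul_apply, outer, smul_eq_mul]
  exact (continuous_const.mul ((cont_coord i).mul (cont_coord j))).sub continuous_const

lemma cont_uvec (q₀ : E3) : Continuous fun A : Matrix (Fin 3) (Fin 3) ℝ => uvec q₀ A :=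
  (PiLp.continuous_toLp 2 (fun _ : Fin 3 => ℝ)).comp
    ((continuous_id.add continuous_const).matrix_mulVec continuous_const)

lemma norm_uvec_ne (q₀ q : E3) (hq : ‖q‖ = 1) (hc : ⟪q₀, q⟫_ℝ ≠ 0) :
    ‖uvec q₀ (Fmap q)‖ ≠ 0 := by
  rw [uvec_Fmap, norm_smul, hq, mul_one, Real.norm_eq_abs]
  exact abs_ne_zero.mpr (by intro h; exact hc (by nlinarith))

def sgnBool (c : ℝ) : Bool := decide (0 < c)

lemma sgnBool_pos {c : ℝ} (h : 0 < c) : sgnBool c = true := decide_eq_true h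
lemma sgnBool_nonpos {c : ℝ} (h : ¬ 0 < c) : sgnBool c = false := decide_eq_false h

attribute [irreducible] sgnBool

def invAux (q₀ : E3) (p : Matrix (Fin 3) (Fin 3) ℝ × Bool) : Metric.sphere (0 : E3) 1 :=
  if h : ‖gfun q₀ p‖ = 1 then ⟨gfun q₀ p, mem_sphere_zero_iff_norm.mpr h⟩
  else ⟨EuclideanSpace.single 0 1, by simp [mem_sphere_zero_iff_norm]⟩

lemma coe_invAux {q₀ : E3} {p : Matrix (Fin 3) (Fin 3) ℝ × Bool} (h : ‖gfun q₀ p‖ = 1) :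
    (invAux q₀ p : E3) = gfun q₀ p := by rw [invAux, dif_pos h]

attribute [irreducible] invAux


lemma contOn_to (hmem : ∀ q : Metric.sphere (0 : EuclideanSpace ℝ (Fin 3)) 1, Fmap q ∈ halfTurns)
    (q₀ : Metric.sphere (0 : EuclideanSpace ℝ (Fin 3)) 1) :
    ContinuousOn (fun q : Metric.sphere (0 : E3) 1 =>
      ((⟨Fmap q, hmem q⟩ : halfTurns), sgnBool ⟪(q₀ : E3), (q : E3)⟫_ℝ))
      {q : Metric.sphere (0 : E3) 1 | ⟪(q₀ : E3), (q : E3)⟫_ℝ ≠ 0} := by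
    have hcont : Continuous fun q : Metric.sphere (0 : E3) 1 => ⟪(q₀ : E3), (q : E3)⟫_ℝ :=
      continuous_const.inner continuous_subtype_val
    apply ContinuousOn.prodMk
    · exact (((cont_Fmap.comp continuous_subtype_val).subtype_mk _)).continuousOn
    · apply continuousOn_of_forall_continuousAt
      intro q hq
      have hq' : ⟪(q₀ : E3), (q : E3)⟫_ℝ ≠ 0 := hq
      rcases hq'.lt_or_gt with h | h
      · have hev : ∀ᶠ (r : Metric.sphere (0 : E3) 1) in nhds q, ⟪(q₀ : E3), (r : E3)⟫_ℝ < 0 :=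
          (hcont.continuousAt).eventually_lt continuousAt_const h
        have hev' : (fun r : Metric.sphere (0 : E3) 1 => sgnBool ⟪(q₀ : E3), (r : E3)⟫_ℝ)
            =ᶠ[nhds q] fun _ => false :=
          hev.mono fun r hr => sgnBool_nonpos (not_lt.mpr hr.le)
        exact hev'.continuousAt
      · have hev : ∀ᶠ (r : Metric.sphere (0 : E3) 1) in nhds q, 0 < ⟪(q₀ : E3), (r : E3)⟫_ℝ :=
          continuousAt_const.eventually_lt (hcont.continuousAt) h
        have hev' : (fun r : Metric.sphere (0 : E3) 1 => sgnBool ⟪(q₀ : E3), (r : E3)⟫_ℝ)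
            =ᶠ[nhds q] fun _ => true :=
          hev.mono fun r hr => sgnBool_pos hr
        exact hev'.continuousAt

lemma contOn_inv (q₀ : Metric.sphere (0 : EuclideanSpace ℝ (Fin 3)) 1) :
    ContinuousOn (fun p : halfTurns × Bool =>
      invAux (q₀ : E3) ((p.1 : Matrix (Fin 3) (Fin 3) ℝ), p.2))
      ({A : halfTurns | ⟪(q₀ : E3), uvec q₀ (A : Matrix (Fin 3) (Fin 3) ℝ)⟫_ℝ ≠ 0} ×ˢ
        Set.univ) := by
    apply continuousOn_of_forall_continuousAt
    intro x hx
    have hA : ⟪(q₀ : E3), uvec q₀ ((x.1 : Matrix (Fin 3) (Fin 3) ℝ))⟫_ℝ ≠ 0 := hx.1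
    obtain ⟨q, hq, hAq⟩ := exists_rep x.1.2
    have hc : ⟪(q₀ : E3), q⟫_ℝ ≠ 0 := by
      rw [hAq] at hA
      exact (base_iff _ _).mp hA
    rw [Topology.IsInducing.subtypeVal.continuousAt_iff]
    -- the underlying ℝ³-valued function agrees with gfun near (A, b)
    have hWopen : IsOpen {p : halfTurns × Bool |
        ⟪(q₀ : E3), uvec q₀ ((p.1 : Matrix (Fin 3) (Fin 3) ℝ))⟫_ℝ ≠ 0} := by
      have : Continuous fun p : halfTurns × Bool =>
          ⟪(q₀ : E3), uvec q₀ ((p.1 : Matrix (Fin 3) (Fin 3) ℝ))⟫_ℝ :=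
        continuous_const.inner ((cont_uvec q₀).comp (continuous_subtype_val.comp continuous_fst))
      exact isOpen_ne.preimage this
    have hWmem : x ∈ {p : halfTurns × Bool |
        ⟪(q₀ : E3), uvec q₀ ((p.1 : Matrix (Fin 3) (Fin 3) ℝ))⟫_ℝ ≠ 0} := hA
    have hev : ∀ᶠ p in nhds x,
        (Subtype.val ∘ fun p : halfTurns × Bool =>
          invAux (q₀ : E3) ((p.1 : Matrix (Fin 3) (Fin 3) ℝ), p.2)) p
        = gfun (q₀ : E3) ((p.1 : Matrix (Fin 3) (Fin 3) ℝ), p.2) := by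
      filter_upwards [hWopen.mem_nhds hWmem] with p hp
      obtain ⟨q', hq', hAq'⟩ := exists_rep p.1.2
      have hc' : ⟪(q₀ : E3), q'⟫_ℝ ≠ 0 := by
        rw [hAq'] at hp
        exact (base_iff _ _).mp hp
      have hgn' : ‖gfun (q₀ : E3) ((p.1 : Matrix (Fin 3) (Fin 3) ℝ), p.2)‖ = 1 := by
        rw [hAq']; exact gfun_norm _ _ hq' hc' p.2
      exact coe_invAux hgn'
    have hgcont : ContinuousAt (fun p : halfTurns × Bool =>
        gfun (q₀ : E3) ((p.1 : Matrix (Fin 3) (Fin 3) ℝ), p.2)) x := by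
      have hun : ‖uvec q₀ ((x.1 : Matrix (Fin 3) (Fin 3) ℝ))‖ ≠ 0 := by
        rw [hAq]; exact norm_uvec_ne _ _ hq hc
      have huu : Continuous fun p : halfTurns × Bool =>
          uvec q₀ ((p.1 : Matrix (Fin 3) (Fin 3) ℝ)) :=
        (cont_uvec q₀).comp (continuous_subtype_val.comp continuous_fst)
      have hsign : Continuous fun p : halfTurns × Bool => (cond p.2 1 (-1) : ℝ) :=
        (continuous_of_discreteTopology
          (f := fun b : Bool => (cond b 1 (-1) : ℝ))).comp continuous_snd
      exact hsign.continuousAt.smul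
        (((huu.norm.continuousAt.inv₀ hun).smul huu.continuousAt))
    exact hgcont.congr_of_eventuallyEq hev

set_option maxHeartbeats 2000000 in
def trivAt (hmem : ∀ q : Metric.sphere (0 : EuclideanSpace ℝ (Fin 3)) 1, Fmap q ∈ halfTurns)
    (q₀ : Metric.sphere (0 : EuclideanSpace ℝ (Fin 3)) 1) :
    Bundle.Trivialization Bool (fun q : Metric.sphere (0 : EuclideanSpace ℝ (Fin 3)) 1 =>
      (⟨Fmap q, hmem q⟩ : halfTurns)) where
  toFun q := (⟨Fmap q, hmem q⟩, sgnBool ⟪(q₀ : E3), (q : E3)⟫_ℝ)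
  invFun p := invAux (q₀ : E3) ((p.1 : Matrix (Fin 3) (Fin 3) ℝ), p.2)
  source := {q | ⟪(q₀ : E3), (q : E3)⟫_ℝ ≠ 0}
  target := {A : halfTurns | ⟪(q₀ : E3), uvec q₀ (A : Matrix (Fin 3) (Fin 3) ℝ)⟫_ℝ ≠ 0} ×ˢ
    Set.univ
  map_source' := by
    intro q hq
    refine ⟨?_, Set.mem_univ _⟩
    exact (base_iff (q₀ : E3) (q : E3)).mpr hq
  map_target' := by
    rintro ⟨A, b⟩ ⟨hA, -⟩
    obtain ⟨q, hq, hAq⟩ := exists_rep A.2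
    have hc : ⟪(q₀ : E3), q⟫_ℝ ≠ 0 := by
      rw [Set.mem_setOf_eq, hAq] at hA
      exact (base_iff _ _).mp hA
    have hgn : ‖gfun (q₀ : E3) ((A : Matrix (Fin 3) (Fin 3) ℝ), b)‖ = 1 := by
      rw [hAq]; exact gfun_norm _ _ hq hc b
    show ⟪(q₀ : E3), (invAux (q₀ : E3) ((A : Matrix (Fin 3) (Fin 3) ℝ), b) : E3)⟫_ℝ ≠ 0
    rw [coe_invAux hgn]
    have : ⟪(q₀ : E3), gfun (q₀ : E3) ((A : Matrix (Fin 3) (Fin 3) ℝ), b)⟫_ℝ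
        = (cond b 1 (-1) : ℝ) * |⟪(q₀ : E3), q⟫_ℝ| := by
      rw [hAq]; exact gfun_inner _ _ hq hc b
    rw [this]
    have h1 : |⟪(q₀ : E3), q⟫_ℝ| ≠ 0 := abs_ne_zero.mpr hc
    refine mul_ne_zero ?_ h1
    cases b <;> norm_num
  left_inv' := by
    intro q hq
    have hq1 : ‖(q : E3)‖ = 1 := mem_sphere_zero_iff_norm.mp q.2
    have hc : ⟪(q₀ : E3), (q : E3)⟫_ℝ ≠ 0 := hq
    set c := ⟪(q₀ : E3), (q : E3)⟫_ℝ with hcdef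
    have hg : gfun (q₀ : E3) (Fmap (q : E3), sgnBool c) = (q : E3) := by
      rw [gfun_spec _ _ hq1 hc]
      have : ((cond (sgnBool c) 1 (-1) : ℝ) * (|c|⁻¹ * c)) = 1 := by
        rcases hc.lt_or_gt with h | h
        · rw [sgnBool_nonpos (not_lt.mpr h.le), abs_of_neg h]
          simp only [cond_false]
          field_simp
        · rw [sgnBool_pos h, abs_of_pos h]
          simp only [cond_true]
          field_simp
      rw [this, one_smul]
    have hn : ‖gfun (q₀ : E3) (Fmap (q : E3), sgnBool c)‖ = 1 := by rw [hg]; exact hq1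
    exact Subtype.ext ((coe_invAux hn).trans hg)
  right_inv' := by
    rintro ⟨A, b⟩ ⟨hA, -⟩
    obtain ⟨q, hq, hAq⟩ := exists_rep A.2
    have hc : ⟪(q₀ : E3), q⟫_ℝ ≠ 0 := by
      rw [Set.mem_setOf_eq, hAq] at hA
      exact (base_iff _ _).mp hA
    have hgn : ‖gfun (q₀ : E3) ((A : Matrix (Fin 3) (Fin 3) ℝ), b)‖ = 1 := by
      rw [hAq]; exact gfun_norm _ _ hq hc b
    refine Prod.ext ?_ ?_
    · apply Subtype.ext
      show Fmap ((invAux (q₀ : E3) ((A : Matrix (Fin 3) (Fin 3) ℝ), b) : E3))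
          = (A : Matrix (Fin 3) (Fin 3) ℝ)
      rw [coe_invAux hgn, hAq]
      exact gfun_Fmap _ _ hq hc b
    · show sgnBool ⟪(q₀ : E3), (invAux (q₀ : E3) ((A : Matrix (Fin 3) (Fin 3) ℝ), b) : E3)⟫_ℝ = b
      rw [coe_invAux hgn]
      have : ⟪(q₀ : E3), gfun (q₀ : E3) ((A : Matrix (Fin 3) (Fin 3) ℝ), b)⟫_ℝ
          = (cond b 1 (-1) : ℝ) * |⟪(q₀ : E3), q⟫_ℝ| := by
        rw [hAq]; exact gfun_inner _ _ hq hc b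
      rw [this]
      have habs : 0 < |⟪(q₀ : E3), q⟫_ℝ| := abs_pos.mpr hc
      cases b
      · simp only [cond_false]
        exact sgnBool_nonpos (by nlinarith)
      · simp only [cond_true, one_mul]
        exact sgnBool_pos habs
  open_source := by
    have : Continuous fun q : Metric.sphere (0 : E3) 1 => ⟪(q₀ : E3), (q : E3)⟫_ℝ :=
      continuous_const.inner continuous_subtype_val
    exact isOpen_ne.preimage this
  open_target := by
    refine IsOpen.prod ?_ isOpen_univ
    have : Continuous fun A : halfTurns => ⟪(q₀ : E3), uvec q₀ (A : Matrix (Fin 3) (Fin 3) ℝ)⟫_ℝ :=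
      continuous_const.inner ((cont_uvec q₀).comp continuous_subtype_val)
    exact isOpen_ne.preimage this
  continuousOn_toFun := contOn_to hmem q₀
  continuousOn_invFun := contOn_inv q₀
  baseSet := {A : halfTurns | ⟪(q₀ : E3), uvec q₀ (A : Matrix (Fin 3) (Fin 3) ℝ)⟫_ℝ ≠ 0}
  open_baseSet := by
    have : Continuous fun A : halfTurns => ⟪(q₀ : E3), uvec q₀ (A : Matrix (Fin 3) (Fin 3) ℝ)⟫_ℝ :=
      continuous_const.inner ((cont_uvec q₀).comp continuous_subtype_val)
    exact isOpen_ne.preimage this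
  source_eq := by
    ext q
    exact (base_iff (q₀ : E3) (q : E3)).symm
  target_eq := rfl
  proj_toFun := fun p _ => rfl

/-- The map `q ↦ 2 q⊗q − I₃` from the unit sphere `S²` to the subspace 𝒮 of the space of
3×3 real matrices is a (two-fold) covering map. -/
theorem Fmap_isCoveringMap
    (hmem : ∀ q : Metric.sphere (0 : EuclideanSpace ℝ (Fin 3)) 1, Fmap q ∈ halfTurns) :
    IsCoveringMap (fun q : Metric.sphere (0 : EuclideanSpace ℝ (Fin 3)) 1 =>
      (⟨Fmap q, hmem q⟩ : halfTurns)) := by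
  apply IsFiberBundle.isCoveringMap (F := Bool)
  intro x
  obtain ⟨q, hq, hAq⟩ := exists_rep x.2
  refine ⟨trivAt hmem ⟨q, mem_sphere_zero_iff_norm.mpr hq⟩, ?_⟩
  show ⟪q, uvec q (x : Matrix (Fin 3) (Fin 3) ℝ)⟫_ℝ ≠ 0
  rw [hAq, inner_uvec_Fmap]
  have : ⟪q, q⟫_ℝ = 1 := by
    rw [real_inner_self_eq_norm_sq, hq]; norm_num
  rw [this]
  norm_num
end
end

section
/- For unit vectors u, v ∈ ℝ³, the Frobenius distance between F(u) and F(v) satisfies the exact identity ‖F(u) − F(v)‖² = 8·(1 − ⟨u,v⟩²) = 2·‖u − v‖²·‖u + v‖². -/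
/-!
Since `F(u) − F(v) = 2 (u⊗u − v⊗v)` and the Frobenius inner product of `a⊗a` and `b⊗b` is
`⟨a,b⟩²`, we get `‖F(u) − F(v)‖² = 4 (‖u‖⁴ + ‖v‖⁴ − 2⟨u,v⟩²) = 8 (1 − ⟨u,v⟩²)` for unit vectors;
the second form is the factorisation `‖u − v‖² ‖u + v‖² = (2 − 2⟨u,v⟩)(2 + 2⟨u,v⟩)`.
-/

noncomputable section
open Matrix
open scoped InnerProductSpace

attribute [local instance] Matrix.frobeniusNormedAddCommGroup

attribute [local instance] Matrix.frobeniusNormSMulClass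

theorem frobenius_norm_sq_eq_sum_sq {m n : Type*} [Fintype m] [Fintype n] (A : Matrix m n ℝ) :
    ‖A‖ ^ 2 = ∑ i, ∑ j, A i j ^ 2 := by
  rw [frobenius_norm_def, ← Real.rpow_natCast, ← Real.rpow_mul (by positivity)]
  norm_num

theorem frobenius_norm_vecMulVec_self_sub_sq {ι : Type*} [Fintype ι]
    (x y : EuclideanSpace ℝ ι) :
    ‖vecMulVec ⇑x ⇑x - vecMulVec ⇑y ⇑y‖ ^ 2 = ‖x‖ ^ 4 + ‖y‖ ^ 4 - 2 * ⟪x, y⟫_ℝ ^ 2 := by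
  have hnorm (z : EuclideanSpace ℝ ι) : ‖z‖ ^ 4 = (∑ i, z i ^ 2) ^ 2 := by
    rw [show 4 = 2 * 2 from rfl, pow_mul, EuclideanSpace.real_norm_sq_eq]
  have hxy : ⟪x, y⟫_ℝ = ∑ i, x i * y i := by
    simp [PiLp.inner_apply, mul_comm]
  rw [frobenius_norm_sq_eq_sum_sq, hnorm, hnorm, hxy, sq, sq, sq]
  simp only [Finset.sum_mul, Finset.mul_sum, ← Finset.sum_add_distrib,
    ← Finset.sum_sub_distrib, Matrix.sub_apply, vecMulVec_apply]
  refine Finset.sum_congr rfl fun i _ => Finset.sum_congr rfl fun j _ => ?_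
  ring

theorem outer_eq_vecMulVec (q v : EuclideanSpace ℝ (Fin 3)) : outer q v = vecMulVec ⇑q ⇑v :=
  rfl

theorem Fmap_sub_Fmap (u v : EuclideanSpace ℝ (Fin 3)) :
    Fmap u - Fmap v = (2 : ℝ) • (outer u u - outer v v) := by
  simp only [Fmap, smul_sub]
  abel

/-- Exact identity for the Frobenius distance of two 180°-rotations:
`‖F(u) − F(v)‖² = 8(1 − ⟨u,v⟩²) = 2‖u−v‖²‖u+v‖²` for unit vectors `u, v`. -/
theorem Fmap_dist_sq (u v : EuclideanSpace ℝ (Fin 3)) (hu : ‖u‖ = 1) (hv : ‖v‖ = 1) :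
    ‖Fmap u - Fmap v‖ ^ 2 = 8 * (1 - ⟪u, v⟫_ℝ ^ 2) ∧
      ‖Fmap u - Fmap v‖ ^ 2 = 2 * ‖u - v‖ ^ 2 * ‖u + v‖ ^ 2 := by
  have h : ‖Fmap u - Fmap v‖ ^ 2 = 8 * (1 - ⟪u, v⟫_ℝ ^ 2) := by
    rw [Fmap_sub_Fmap, norm_smul, mul_pow, outer_eq_vecMulVec, outer_eq_vecMulVec,
      frobenius_norm_vecMulVec_self_sub_sq, hu, hv, Real.norm_two]
    ring
  refine ⟨h, ?_⟩
  rw [h, norm_sub_sq_real, norm_add_sq_real, hu, hv]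
  ring
end
end

section
/- For unit vectors u, v ∈ ℝ³, one has the Lipschitz estimate ‖F(u) − F(v)‖ ≤ 2√2 · ‖u − v‖ in the Frobenius norm. -/
noncomputable section
open Matrix
open scoped InnerProductSpace

attribute [local instance] Matrix.frobeniusNormedAddCommGroup

/-- Lipschitz estimate `‖F(u) − F(v)‖ ≤ 2√2 ‖u − v‖` (Frobenius norm) for unit vectors. -/
theorem Fmap_lipschitz (u v : EuclideanSpace ℝ (Fin 3)) (hu : ‖u‖ = 1) (hv : ‖v‖ = 1) :
    ‖Fmap u - Fmap v‖ ≤ 2 * Real.sqrt 2 * ‖u - v‖ := by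
  have hu2 : ∑ i, u i ^ 2 = 1 := by
    have := hu
    rw [EuclideanSpace.norm_eq] at this
    have h := congrArg (fun x => x ^ 2) this
    simp [Real.sq_sqrt (Finset.sum_nonneg fun i _ => sq_nonneg _)] at h
    simpa [Real.norm_eq_abs, sq_abs] using h
  have hv2 : ∑ i, v i ^ 2 = 1 := by
    have := hv
    rw [EuclideanSpace.norm_eq] at this
    have h := congrArg (fun x => x ^ 2) this
    simp [Real.sq_sqrt (Finset.sum_nonneg fun i _ => sq_nonneg _)] at h
    simpa [Real.norm_eq_abs, sq_abs] using h
  rw [Matrix.frobenius_norm_def, EuclideanSpace.norm_eq, ← Real.sqrt_eq_rpow]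
  have key : ∑ i, ∑ j, ‖(Fmap u - Fmap v) i j‖ ^ 2 ≤ 8 * ∑ i, ‖(u - v) i‖ ^ 2 := by
    simp only [Fmap, outer, Matrix.sub_apply, Matrix.smul_apply, Matrix.one_apply,
      Real.norm_eq_abs, sq_abs, PiLp.sub_apply, smul_eq_mul]
    rw [Fin.sum_univ_three] at hu2 hv2 ⊢
    simp only [Fin.sum_univ_three]
    norm_num
    nlinarith [sq_nonneg (1 - (u 0 * v 0 + u 1 * v 1 + u 2 * v 2)), sq_nonneg (u 0 * v 1 - u 1 * v 0), sq_nonneg (u 0 * v 2 - u 2 * v 0), sq_nonneg (u 1 * v 2 - u 2 * v 1)]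
  have h8 : Real.sqrt (8 * ∑ i, ‖(u - v) i‖ ^ 2)
      = 2 * Real.sqrt 2 * Real.sqrt (∑ i, ‖(u - v) i‖ ^ 2) := by
    rw [Real.sqrt_mul (by norm_num)]
    congr 1
    rw [show (8:ℝ) = 2^2 * 2 by norm_num, Real.sqrt_mul (by positivity), Real.sqrt_sq (by norm_num)]
  rw [← h8]
  exact Real.sqrt_le_sqrt (by simpa [Real.rpow_natCast] using key)
end
end

section
/- For a unit vector q ∈ ℝ³ and any v ∈ ℝ³ with ⟨q, v⟩ = 0, the Frobenius norm of the matrix 2·(v⊗q + q⊗v) satisfies ‖2·(v⊗q + q⊗v)‖² = 8·‖v‖². (Thus the differential of F at q stretches tangent vectors of S² by the constant factor √8, i.e. F is homothetic.) -/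
noncomputable section
open Matrix
open scoped InnerProductSpace

attribute [local instance] Matrix.frobeniusNormedAddCommGroup

/-- For a unit vector `q` and `v ⊥ q`, the differential `2(v⊗q + q⊗v)` of `F` at `q` in
direction `v` has Frobenius norm squared `8‖v‖²`: `F` is homothetic with factor `√8`. -/
theorem Fmap_differential_homothetic (q v : EuclideanSpace ℝ (Fin 3))
    (hq : ‖q‖ = 1) (hqv : ⟪q, v⟫_ℝ = 0) :
    ‖(2 : ℝ) • (outer v q + outer q v)‖ ^ 2 = 8 * ‖v‖ ^ 2 := by
  have hq2 : ‖q‖ ^ 2 = 1 := by rw [hq]; norm_num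
  rw [← real_inner_self_eq_norm_sq] at hq2
  have hv2 : ‖v‖ ^ 2 = ⟪v, v⟫_ℝ := (real_inner_self_eq_norm_sq v).symm
  rw [Matrix.frobenius_norm_def]
  rw [← Real.rpow_natCast _ 2, ← Real.rpow_mul (by positivity)]
  norm_num
  simp only [EuclideanSpace.inner_eq_star_dotProduct] at hq2 hqv ⊢
  rw [hv2]
  simp only [EuclideanSpace.inner_eq_star_dotProduct]
  simp [Fin.sum_univ_three, outer, dotProduct, Matrix.smul_apply, Matrix.add_apply,
    Real.norm_eq_abs, mul_pow, sq_abs] at hq2 hqv ⊢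
  nlinarith [hq2, hqv]
end
end

section
/- Let E be a real normed vector space and n : E → ℝ³ a map with ‖n(y)‖ = 1 for all y ∈ E, differentiable at a point x ∈ E. Define R : E → Matrix (Fin 3) (Fin 3) ℝ by R(y) = 2 n(y)⊗n(y) − I₃. Then R is differentiable at x and for every direction w ∈ E, ‖DR(x)(w)‖² = 8·‖Dn(x)(w)‖², where the matrix norm is the Frobenius norm. -/
noncomputable section
open Matrix
open scoped InnerProductSpace

attribute [local instance] Matrix.frobeniusNormedAddCommGroup Matrix.frobeniusNormedSpace

lemma frob_sq (A : Matrix (Fin 3) (Fin 3) ℝ) : ‖A‖ ^ 2 = ∑ i, ∑ j, (A i j)^2 := by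
  have h0 : (0:ℝ) ≤ ∑ i, ∑ j, ‖A i j‖ ^ (2:ℝ) := by positivity
  rw [frobenius_norm_def, ← Real.rpow_natCast _ 2, ← Real.rpow_mul h0]
  norm_num

lemma euclid_sq (v : EuclideanSpace ℝ (Fin 3)) : ‖v‖ ^ 2 = ∑ i, (v i)^2 := by
  rw [EuclideanSpace.norm_eq, Real.sq_sqrt (by positivity)]
  simp [sq_abs]

lemma outer_norm_le (q v : EuclideanSpace ℝ (Fin 3)) : ‖outer q v‖ ≤ 1 * (‖q‖ * ‖v‖) := by
  rw [one_mul]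
  have h1 : ‖outer q v‖ ^ 2 = (‖q‖ * ‖v‖) ^ 2 := by
    rw [frob_sq, mul_pow, euclid_sq, euclid_sq, Finset.sum_mul_sum]
    simp [outer, mul_pow]
  rw [← Real.sqrt_sq (norm_nonneg _), h1,
    Real.sqrt_sq (mul_nonneg (norm_nonneg _) (norm_nonneg _))]

lemma outer_bilin : IsBoundedBilinearMap ℝ
    (fun p : (EuclideanSpace ℝ (Fin 3)) × (EuclideanSpace ℝ (Fin 3)) => outer p.1 p.2) where
  add_left := by intro a b c; funext i j; simp [outer]; ring
  smul_left := by intro c a b; funext i j; simp [outer, Matrix.smul_apply]; ring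
  add_right := by intro a b c; funext i j; simp [outer]; ring
  smul_right := by intro c a b; funext i j; simp [outer, Matrix.smul_apply]; ring
  bound := ⟨1, one_pos, fun q v => by simpa [mul_assoc] using outer_norm_le q v⟩

/-- If `n : E → ℝ³` is sphere-valued and differentiable at `x`, then `R = F ∘ n` is
differentiable at `x` and `‖DR(x)(w)‖² = 8 ‖Dn(x)(w)‖²` for every direction `w`
(Frobenius norm on matrices). -/
theorem Fmap_comp_energy_identity {E : Type*} [NormedAddCommGroup E] [NormedSpace ℝ E]
    (n : E → EuclideanSpace ℝ (Fin 3)) (hn : ∀ y, ‖n y‖ = 1) (x : E)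
    (hdiff : DifferentiableAt ℝ n x) :
    DifferentiableAt ℝ (fun y => Fmap (n y)) x ∧
      ∀ w : E,
        ‖fderiv ℝ (fun y => Fmap (n y)) x w‖ ^ 2 = 8 * ‖fderiv ℝ n x w‖ ^ 2 := by
  set q := n x with hq
  set f' := fderiv ℝ n x with hf'
  have hb := outer_bilin
  have hO : HasFDerivAt (fun y => outer (n y) (n y))
      ((hb.deriv (q, q)).comp (f'.prod f')) x := by
    have h1 : HasFDerivAt (fun y => (n y, n y)) (f'.prod f') x :=
      HasFDerivAt.prodMk (hdiff.hasFDerivAt) (hdiff.hasFDerivAt)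
    exact (hb.hasFDerivAt (q, q)).comp x h1
  have hR : HasFDerivAt (fun y => Fmap (n y))
      ((2:ℝ) • ((hb.deriv (q, q)).comp (f'.prod f'))) x := by
    simp only [Fmap]
    exact (hO.const_smul (2:ℝ)).sub_const 1
  refine ⟨hR.differentiableAt, fun w => ?_⟩
  rw [show fderiv ℝ (fun y => Fmap (n y)) x = _ from HasFDerivAt.fderiv hR]
  set v := f' w with hv
  have happ : ((2:ℝ) • ((hb.deriv (q, q)).comp (f'.prod f'))) w
      = (2:ℝ) • (outer q v + outer v q) := by
    simp [hb.deriv_apply, add_comm, hv]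
  erw [happ]
  -- orthogonality
  have horth : ∑ i, q i * v i = 0 := by
    have hconst : (fun y => ⟪n y, n y⟫_ℝ) = fun _ => (1:ℝ) := by
      funext y
      rw [real_inner_self_eq_norm_sq, hn y]; norm_num
    have h0 : fderiv ℝ (fun y => ⟪n y, n y⟫_ℝ) x w = 0 := by
      rw [hconst]; simp
    rw [fderiv_inner_apply ℝ hdiff hdiff] at h0
    have hz : ⟪q, v⟫_ℝ = 0 := by rw [← hq, ← hv] at h0; linarith [real_inner_comm v q]
    rw [show ⟪q, v⟫_ℝ = ∑ i, q i * v i from by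
      simp [PiLp.inner_apply, RCLike.inner_apply, mul_comm]] at hz
    exact hz
  have hqn : ∑ i, (q i)^2 = 1 := by
    have := euclid_sq q
    rw [hn x] at this; simpa using this.symm
  rw [frob_sq, euclid_sq]
  simp only [Matrix.smul_apply, Matrix.add_apply, smul_eq_mul, outer]
  rw [Fin.sum_univ_three] at horth hqn ⊢
  simp only [Fin.sum_univ_three]
  nlinarith [horth, hqn, sq_nonneg (v 0), sq_nonneg (v 1), sq_nonneg (v 2)]
end
end

section
/- Let W be a real normed vector space and f : ℝ³ → W be differentiable at a point x = (x₁, x₂, x₃) with x₃ ≠ 0, and suppose the differential of f at x annihilates the radial direction, Df(x)(x) = 0 (as holds for maps constant along rays through the origin). If x₁² + x₂² ≤ x₃², then ‖∂₁f(x)‖² + ‖∂₂f(x)‖² + ‖∂₃f(x)‖² ≤ 3·(‖∂₁f(x)‖² + ‖∂₂f(x)‖²). -/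
/-- If `f : ℝ³ → W` is differentiable at `x` with `x₃ ≠ 0`, the differential annihilates the
radial direction (`Df(x)(x) = 0`), and `x₁² + x₂² ≤ x₃²`, then
`‖∂₁f‖² + ‖∂₂f‖² + ‖∂₃f‖² ≤ 3(‖∂₁f‖² + ‖∂₂f‖²)` at `x`. -/
theorem cone_gradient_estimate {W : Type*} [NormedAddCommGroup W] [NormedSpace ℝ W]
    (f : EuclideanSpace ℝ (Fin 3) → W) (x : EuclideanSpace ℝ (Fin 3))
    (hdiff : DifferentiableAt ℝ f x) (hx3 : x 2 ≠ 0)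
    (hrad : fderiv ℝ f x x = 0)
    (hcone : (x 0) ^ 2 + (x 1) ^ 2 ≤ (x 2) ^ 2) :
    ‖fderiv ℝ f x (EuclideanSpace.single 0 1)‖ ^ 2 +
        ‖fderiv ℝ f x (EuclideanSpace.single 1 1)‖ ^ 2 +
        ‖fderiv ℝ f x (EuclideanSpace.single 2 1)‖ ^ 2 ≤
      3 * (‖fderiv ℝ f x (EuclideanSpace.single 0 1)‖ ^ 2 +
        ‖fderiv ℝ f x (EuclideanSpace.single 1 1)‖ ^ 2) := by
  set D := fderiv ℝ f x with hD
  have hxdecomp : x = x 0 • EuclideanSpace.single 0 1 + x 1 • EuclideanSpace.single 1 1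
      + x 2 • EuclideanSpace.single 2 1 := by
    ext i
    fin_cases i <;>
      simp [PiLp.add_apply, PiLp.smul_apply, EuclideanSpace.single_apply]
  have hzero : x 0 • D (EuclideanSpace.single 0 1) + x 1 • D (EuclideanSpace.single 1 1)
      + x 2 • D (EuclideanSpace.single 2 1) = 0 := by
    rw [← map_smul, ← map_smul, ← map_smul, ← map_add, ← map_add, ← hxdecomp, hrad]
  set a := ‖D (EuclideanSpace.single 0 1)‖ with ha
  set b := ‖D (EuclideanSpace.single 1 1)‖ with hb
  set c := ‖D (EuclideanSpace.single 2 1)‖ with hc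
  have hkey : |x 2| * c ≤ |x 0| * a + |x 1| * b := by
    have : x 2 • D (EuclideanSpace.single 2 1)
        = -(x 0 • D (EuclideanSpace.single 0 1) + x 1 • D (EuclideanSpace.single 1 1)) := by
      rw [eq_neg_iff_add_eq_zero]
      linear_combination (norm := abel) hzero
    calc |x 2| * c = ‖x 2 • D (EuclideanSpace.single 2 1)‖ := by
          rw [norm_smul, Real.norm_eq_abs]
      _ ≤ |x 0| * a + |x 1| * b := by
          rw [this, norm_neg]
          refine (norm_add_le _ _).trans ?_
          simp [norm_smul, Real.norm_eq_abs, ha, hb]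
  have ha0 : 0 ≤ a := norm_nonneg _
  have hb0 : 0 ≤ b := norm_nonneg _
  have hc0 : 0 ≤ c := norm_nonneg _
  have h2 : (|x 2| * c) ^ 2 ≤ (|x 0| * a + |x 1| * b) ^ 2 := by
    apply sq_le_sq' _ hkey
    nlinarith [abs_nonneg (x 2), abs_nonneg (x 0), abs_nonneg (x 1)]
  have hx2sq : (0:ℝ) < (x 2) ^ 2 := by positivity
  have hcs : (|x 0| * a + |x 1| * b) ^ 2 ≤ ((x 0) ^ 2 + (x 1) ^ 2) * (a ^ 2 + b ^ 2) := by
    nlinarith [sq_nonneg (|x 0| * b - |x 1| * a), sq_abs (x 0), sq_abs (x 1)]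
  have : c ^ 2 ≤ a ^ 2 + b ^ 2 := by
    rw [← mul_le_mul_iff_right₀ hx2sq]
    calc (x 2) ^ 2 * c ^ 2 = (|x 2| * c) ^ 2 := by rw [mul_pow, sq_abs]
      _ ≤ ((x 0) ^ 2 + (x 1) ^ 2) * (a ^ 2 + b ^ 2) := h2.trans hcs
      _ ≤ (x 2) ^ 2 * (a ^ 2 + b ^ 2) := mul_le_mul_of_nonneg_right hcone (by positivity)
  linarith [sq_nonneg a, sq_nonneg b]
end
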